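/- arXiv:2510.23925 — 3 statements merged into one kernel-verified Lean document; each statement's English description precedes it below -/
import Mathlib

section
/- Let λ be a positive natural number, t a natural number, M ≥ 0, and R : ℕ → ℝ. Suppose the discrete second differences of R are bounded on the segment: |R(s+1) − 2·R(s) + R(s−1)| ≤ M for all s with t+1 ≤ s ≤ t+λ−1. Define the linear interpolant R̃(t+i) := R(t) + (i/λ)·(R(t+λ) − R(t)). Then for every i with 0 ≤ i ≤ λ, |R̃(t+i) − R(t+i)| ≤ (M/2)·i·(λ−i). -/
/-- A discretely concave sequence vanishing at the endpoints is nonnegative. -/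
lemma concave_nonneg_aux (lam : ℕ) (hlam : 0 < lam) (F : ℕ → ℝ)
    (h0 : F 0 = 0) (hl : F lam = 0)
    (hconc : ∀ i : ℕ, 1 ≤ i → i + 1 ≤ lam → F (i + 1) + F (i - 1) ≤ 2 * F i) :
    ∀ i : ℕ, i ≤ lam → 0 ≤ F i := by
  set d : ℕ → ℝ := fun j => F (j + 1) - F j with hd
  have hmono : ∀ j k : ℕ, j ≤ k → k + 1 ≤ lam → d k ≤ d j := by
    intro j k hjk hk
    induction k, hjk using Nat.le_induction with
    | base => exact le_refl _
    | succ k hjk ih =>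
      have h1 : F (k + 1 + 1) + F (k + 1 - 1) ≤ 2 * F (k + 1) :=
        hconc (k + 1) (by omega) (by omega)
      have h2 : d (k + 1) ≤ d k := by
        simp only [hd, Nat.add_sub_cancel] at h1 ⊢
        linarith
      exact h2.trans (ih (by omega))
  have hsum : ∀ i : ℕ, F i = ∑ j ∈ Finset.range i, d j := by
    intro i
    rw [Finset.sum_range_sub F i, h0, sub_zero]
  intro i hi
  rcases Nat.eq_zero_or_pos i with h | h1
  · simp [h, h0]
  rcases eq_or_lt_of_le hi with h | h2
  · simp [h, hl]
  -- 1 ≤ i < lam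
  set S1 : ℝ := ∑ j ∈ Finset.range i, d j with hS1
  set S2 : ℝ := ∑ j ∈ Finset.Ico i lam, d j with hS2
  have hsplit : S1 + S2 = 0 := by
    rw [hS1, hS2, Finset.sum_range_add_sum_Ico d hi, ← hsum, hl]
  have hA : (i : ℝ) * d (i - 1) ≤ S1 := by
    have := Finset.card_nsmul_le_sum (Finset.range i) d (d (i - 1)) (by
      intro j hj
      exact hmono j (i - 1) (by simp at hj; omega) (by omega))
    simpa [nsmul_eq_mul] using this
  have hB : S2 ≤ ((lam - i : ℕ) : ℝ) * d i := by
    have := Finset.sum_le_card_nsmul (Finset.Ico i lam) d (d i) (by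
      intro j hj
      simp only [Finset.mem_Ico] at hj
      exact hmono i j hj.1 (by omega))
    simpa [nsmul_eq_mul] using this
  have hC : d i ≤ d (i - 1) := by
    have h1' : F (i + 1) + F (i - 1) ≤ 2 * F i := hconc i h1 (by omega)
    have hi1 : i - 1 + 1 = i := by omega
    simp only [hd]
    rw [hi1]
    linarith
  have hn1 : (0 : ℝ) < (i : ℝ) := by exact_mod_cast h1
  have hn2 : (0 : ℝ) < ((lam - i : ℕ) : ℝ) := by
    have : 0 < lam - i := by omega
    exact_mod_cast this
  have key : 0 ≤ S1 := by
    nlinarith [mul_le_mul_of_nonneg_left hC hn2.le, mul_le_mul_of_nonneg_left hB hn1.le,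
      mul_le_mul_of_nonneg_left hA hn2.le]
  rw [hsum i]; exact key

/-- Pointwise discrete linear-interpolation error bound: if the discrete second
differences of `R` are bounded by `M` on the segment, then the interpolation error at
offset `i` is at most `(M/2) * i * (λ - i)`. -/
theorem discrete_interpolation_error_pointwise (lam t : ℕ) (hlam : 0 < lam)
    (M : ℝ) (hM : 0 ≤ M) (R : ℕ → ℝ)
    (hsec : ∀ s : ℕ, t + 1 ≤ s → s ≤ t + lam - 1 →
      |R (s + 1) - 2 * R s + R (s - 1)| ≤ M) :
    ∀ i : ℕ, i ≤ lam →
      |R t + ((i : ℝ) / (lam : ℝ)) * (R (t + lam) - R t) - R (t + i)| ≤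
        (M / 2) * (i : ℝ) * ((lam : ℝ) - (i : ℝ)) := by
  have hlamR : (0 : ℝ) < (lam : ℝ) := by exact_mod_cast hlam
  set E : ℕ → ℝ := fun i => R t + ((i : ℝ) / (lam : ℝ)) * (R (t + lam) - R t) - R (t + i)
    with hE
  set Q : ℕ → ℝ := fun i => (M / 2) * (i : ℝ) * ((lam : ℝ) - (i : ℝ)) with hQ
  -- second difference facts for E
  have hsecE : ∀ i : ℕ, 1 ≤ i → i + 1 ≤ lam →
      E (i + 1) + E (i - 1) - 2 * E i = -(R (t + i + 1) - 2 * R (t + i) + R (t + i - 1)) := by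
    intro i h1 h2
    have hc : ((i - 1 : ℕ) : ℝ) = (i : ℝ) - 1 := by
      push_cast [h1]; ring
    have he1 : t + (i + 1) = t + i + 1 := by omega
    have he2 : t + (i - 1) = t + i - 1 := by omega
    simp only [hE, hc, he1, he2]
    push_cast
    field_simp
    ring
  have hsecQ : ∀ i : ℕ, 1 ≤ i →
      Q (i + 1) + Q (i - 1) - 2 * Q i = -M := by
    intro i h1
    have hc : ((i - 1 : ℕ) : ℝ) = (i : ℝ) - 1 := by
      push_cast [h1]; ring
    simp only [hQ, hc]
    push_cast
    ring
  have hQ0 : Q 0 = 0 := by simp [hQ]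
  have hQl : Q lam = 0 := by simp [hQ]
  have hE0 : E 0 = 0 := by simp [hE]
  have hEl : E lam = 0 := by
    simp only [hE]
    rw [div_self hlamR.ne']
    ring
  have hbound : ∀ i : ℕ, 1 ≤ i → i + 1 ≤ lam →
      |R (t + i + 1) - 2 * R (t + i) + R (t + i - 1)| ≤ M := by
    intro i h1 h2
    have := hsec (t + i) (by omega) (by omega)
    simpa using this
  intro i hi
  have hplus : 0 ≤ Q i + E i := by
    refine concave_nonneg_aux lam hlam (fun j => Q j + E j) (by simp [hQ0, hE0])
      (by simp [hQl, hEl]) ?_ i hi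
    intro j h1 h2
    have hb := hbound j h1 h2
    have h3 := hsecE j h1 h2
    have h4 := hsecQ j h1
    have := abs_le.mp hb
    linarith [this.1, this.2]
  have hminus : 0 ≤ Q i - E i := by
    refine concave_nonneg_aux lam hlam (fun j => Q j - E j) (by simp [hQ0, hE0])
      (by simp [hQl, hEl]) ?_ i hi
    intro j h1 h2
    have hb := hbound j h1 h2
    have h3 := hsecE j h1 h2
    have h4 := hsecQ j h1
    have := abs_le.mp hb
    linarith [this.1, this.2]
  have : |E i| ≤ Q i := abs_le.mpr ⟨by linarith, by linarith⟩
  simpa [hE, hQ] using this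
end

section
/- Let λ be a positive natural number, t a natural number, M ≥ 0, and R : ℕ → ℝ with |R(s+1) − 2·R(s) + R(s−1)| ≤ M for all s with t+1 ≤ s ≤ t+λ−1. Define the linear interpolant R̃(t+i) := R(t) + (i/λ)·(R(t+λ) − R(t)). Then for every i with 0 ≤ i ≤ λ, |R̃(t+i) − R(t+i)| ≤ M·λ²/8. -/
/-- Discrete maximum principle: a discretely convex function vanishing at the
endpoints is nonpositive on the whole segment. -/
lemma discrete_max_principle (n : ℕ) (F : ℕ → ℝ) (h0 : F 0 = 0) (hn : F n = 0)
    (hconv : ∀ k : ℕ, k + 2 ≤ n → 0 ≤ F (k + 2) - 2 * F (k + 1) + F k) :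
    ∀ i : ℕ, i ≤ n → F i ≤ 0 := by
  set D : ℕ → ℝ := fun j => F (j + 1) - F j with hD
  have hstep : ∀ j : ℕ, j + 2 ≤ n → D j ≤ D (j + 1) := by
    intro j hj
    have := hconv j hj
    simp only [hD]
    linarith
  have hmono : ∀ j k : ℕ, j ≤ k → k + 1 ≤ n → D j ≤ D k := by
    intro j k hjk hk
    induction k with
    | zero => rw [Nat.le_zero.mp hjk]
    | succ m ih =>
      rcases Nat.eq_or_lt_of_le hjk with h | h
      · subst h; exact le_refl _
      · have h1 : j ≤ m := by omega
        have h2 : m + 1 ≤ n := by omega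
        exact le_trans (ih h1 h2) (hstep m (by omega))
  have htel : ∀ i : ℕ, (Finset.range i).sum D = F i := by
    intro i
    have := Finset.sum_range_sub (f := F) i
    simpa [h0, hD] using this
  intro i hi
  rcases Nat.eq_zero_or_pos i with rfl | hi0
  · simp [h0]
  rcases Nat.eq_or_lt_of_le hi with rfl | hilt
  · simp [hn]
  obtain ⟨m, rfl⟩ : ∃ m, i = m + 1 := ⟨i - 1, by omega⟩
  set c : ℝ := D m with hc
  have hS1 : (Finset.range (m + 1)).sum D ≤ (m + 1 : ℕ) • c := by
    have := Finset.sum_le_card_nsmul (Finset.range (m + 1)) D c ?_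
    · simpa using this
    · intro j hj
      rw [Finset.mem_range] at hj
      exact hmono j m (by omega) (by omega)
  have hS2 : ((n - (m + 1) : ℕ)) • c ≤ (Finset.Ico (m + 1) n).sum D := by
    have := Finset.card_nsmul_le_sum (Finset.Ico (m + 1) n) D c ?_
    · simpa [Nat.card_Ico] using this
    · intro j hj
      rw [Finset.mem_Ico] at hj
      exact hmono m j (by omega) (by omega)
  have hsplit : (Finset.range (m + 1)).sum D + (Finset.Ico (m + 1) n).sum D = 0 := by
    rw [Finset.range_eq_Ico, Finset.sum_Ico_consecutive D (by omega) (by omega),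
      ← Finset.range_eq_Ico, htel, hn]
  rw [← htel]
  have hcard : (1 : ℕ) ≤ n - (m + 1) := by omega
  have hcard' : (1 : ℝ) ≤ ((n - (m + 1) : ℕ) : ℝ) := by exact_mod_cast hcard
  rw [nsmul_eq_mul] at hS1 hS2
  rcases le_or_gt c 0 with hc0 | hc0
  · have : ((m + 1 : ℕ) : ℝ) * c ≤ 0 := mul_nonpos_of_nonneg_of_nonpos (by positivity) hc0
    linarith
  · nlinarith

/-- Uniform discrete linear-interpolation error bound: if the discrete second
differences of `R` are bounded by `M` on the segment, then the interpolation error is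
uniformly at most `M * λ² / 8`. -/
theorem discrete_interpolation_error_uniform (lam t : ℕ) (hlam : 0 < lam)
    (M : ℝ) (hM : 0 ≤ M) (R : ℕ → ℝ)
    (hsec : ∀ s : ℕ, t + 1 ≤ s → s ≤ t + lam - 1 →
      |R (s + 1) - 2 * R s + R (s - 1)| ≤ M) :
    ∀ i : ℕ, i ≤ lam →
      |R t + ((i : ℝ) / (lam : ℝ)) * (R (t + lam) - R t) - R (t + i)| ≤
        M * (lam : ℝ) ^ 2 / 8 := by
  have hlamR : (0 : ℝ) < (lam : ℝ) := by exact_mod_cast hlam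
  set E : ℕ → ℝ := fun i =>
    R (t + i) - (R t + ((i : ℝ) / (lam : ℝ)) * (R (t + lam) - R t)) with hE
  have hE0 : E 0 = 0 := by simp [hE]
  have hEl : E lam = 0 := by
    simp only [hE]
    rw [div_self hlamR.ne']
    ring
  have hEsec : ∀ k : ℕ, k + 2 ≤ lam →
      E (k + 2) - 2 * E (k + 1) + E k
        = R (t + k + 2) - 2 * R (t + k + 1) + R (t + k) := by
    intro k hk
    simp only [hE]
    have h1 : t + (k + 2) = t + k + 2 := by ring
    have h2 : t + (k + 1) = t + k + 1 := by ring
    rw [h1, h2]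
    push_cast
    field_simp
    ring
  have hEbound : ∀ k : ℕ, k + 2 ≤ lam →
      |E (k + 2) - 2 * E (k + 1) + E k| ≤ M := by
    intro k hk
    rw [hEsec k hk]
    have := hsec (t + k + 1) (by omega) (by omega)
    have h3 : t + k + 1 - 1 = t + k := by omega
    have h4 : t + k + 1 + 1 = t + k + 2 := by omega
    rw [h3, h4] at this
    exact this
  -- quadratic comparison function
  set g : ℕ → ℝ := fun i => M * (i : ℝ) * ((lam : ℝ) - (i : ℝ)) / 2 with hg
  have hg0 : g 0 = 0 := by simp [hg]
  have hgl : g lam = 0 := by simp [hg]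
  have hgsec : ∀ k : ℕ, g (k + 2) - 2 * g (k + 1) + g k = -M := by
    intro k
    simp only [hg]
    push_cast
    ring
  have hupper : ∀ i : ℕ, i ≤ lam → E i ≤ g i := by
    have := discrete_max_principle lam (fun i => E i - g i)
      (by simp [hE0, hg0]) (by simp [hEl, hgl]) ?_
    · intro i hi
      have h := this i hi
      simpa using h
    · intro k hk
      have h1 := hEbound k hk
      have h2 := hgsec k
      rw [abs_le] at h1
      linarith [h1.2]
  have hlower : ∀ i : ℕ, i ≤ lam → -(g i) ≤ E i := by
    have := discrete_max_principle lam (fun i => -E i - g i)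
      (by simp [hE0, hg0]) (by simp [hEl, hgl]) ?_
    · intro i hi
      have h := this i hi
      linarith
    · intro k hk
      have h1 := hEbound k hk
      have h2 := hgsec k
      rw [abs_le] at h1
      linarith [h1.1]
  intro i hi
  have hEi : |E i| ≤ g i := abs_le.mpr ⟨hlower i hi, hupper i hi⟩
  have hgoal : |R t + ((i : ℝ) / (lam : ℝ)) * (R (t + lam) - R t) - R (t + i)| = |E i| := by
    rw [hE]
    rw [abs_sub_comm]
  rw [hgoal]
  refine hEi.trans ?_
  have hiR : (i : ℝ) ≤ (lam : ℝ) := by exact_mod_cast hi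
  have hi0 : (0 : ℝ) ≤ (i : ℝ) := by positivity
  simp only [hg]
  nlinarith [sq_nonneg ((lam : ℝ) - 2 * (i : ℝ)), mul_nonneg hi0 (sub_nonneg.mpr hiR)]
end

section
/- Let λ be a positive natural number, M ≥ 0, R_min > 0, and assume δ := M·λ²/(8·R_min) < 1. Let R : ℕ → ℝ satisfy R(s) ≥ R_min for all s ≤ t+λ and |R(s+1) − 2·R(s) + R(s−1)| ≤ M for all s with t+1 ≤ s ≤ t+λ−1. Let q : ℕ → ℝ be positive, and define F(s) := R(s)/q(s) and F̃(s) := R̃(s)/q(s), where R̃ is the linear interpolant R̃(t+i) := R(t) + (i/λ)·(R(t+λ) − R(t)) for 0 ≤ i ≤ λ. Suppose that for indices t ≤ i < j ≤ t+λ and positive reals P, Q the flow consistency F(i)·P = F(j)·Q holds. Then F̃(i)·P = F̃(j)·Q·θ for some θ ∈ ℝ with |θ − 1| ≤ 2δ/(1−δ). -/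
/-!
The linear interpolant `R̃` is uniformly within `Mλ²/8` of `R` on the segment: the error vanishes
at both ends and its second differences are bounded by `M`, so the discrete maximum principle
applied to `±error - M s (λ - s) / 2` bounds it by `M s (λ - s) / 2 ≤ Mλ²/8`. Dividing by
`R ≥ R_min`, the ratio `R̃ / R` is within `δ` of `1` at every node, and
`θ = (R̃ i / R i) / (R̃ j / R j)` transports the flow identity from `R` to `R̃`; the bound
`|x / y - 1| ≤ 2δ / (1 - δ)` for `x, y` within `δ` of `1` finishes the proof.
-/

open Finset

def secondDiff (f : ℕ → ℝ) (k : ℕ) : ℝ := f (k + 2) - 2 * f (k + 1) + f k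

lemma natCast_mul_sum_range_le_of_monotoneOn {d : ℕ → ℝ} {n k : ℕ}
    (hd : MonotoneOn d (Set.Iio n)) (hk : k ≤ n) :
    (n : ℝ) * ∑ s ∈ range k, d s ≤ k * ∑ s ∈ range n, d s := by
  rcases hk.eq_or_lt with rfl | hkn
  · rfl
  have hlow : ∑ s ∈ range k, d s ≤ k * d k := by
    simpa using sum_le_card_nsmul (range k) d (d k) fun s hs =>
      hd (Set.mem_Iio.2 ((mem_range.1 hs).trans hkn)) hkn (mem_range.1 hs).le
  have hhigh : ((n : ℝ) - k) * d k ≤ ∑ s ∈ Ico k n, d s := by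
    simpa [Nat.cast_sub hk] using card_nsmul_le_sum (Ico k n) d (d k) fun s hs =>
      hd hkn (Set.mem_Iio.2 (mem_Ico.1 hs).2) (mem_Ico.1 hs).1
  rw [← sum_range_add_sum_Ico d hk]
  nlinarith [mul_le_mul_of_nonneg_left hlow (sub_nonneg.2 (Nat.cast_le.2 hk) : (0 : ℝ) ≤ n - k),
    mul_le_mul_of_nonneg_left hhigh k.cast_nonneg]

lemma nonpos_of_secondDiff_nonneg {f : ℕ → ℝ} {n : ℕ}
    (hf : ∀ k, k + 2 ≤ n → 0 ≤ secondDiff f k) (h0 : f 0 ≤ 0) (hn : f n ≤ 0)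
    {k : ℕ} (hk : k ≤ n) : f k ≤ 0 := by
  rcases Nat.eq_zero_or_pos n with rfl | hnpos
  · rwa [Nat.le_zero.1 hk]
  have hmono : MonotoneOn (fun s => f (s + 1) - f s) (Set.Iio n) :=
    monotoneOn_of_le_add_one Set.ordConnected_Iio fun s _ _ hs => by
      have := hf s (by have := Set.mem_Iio.1 hs; omega)
      simp only [secondDiff] at this
      linarith
  have hchord := natCast_mul_sum_range_le_of_monotoneOn hmono hk
  rw [sum_range_sub, sum_range_sub] at hchord
  have hnk : (0 : ℝ) ≤ n - k := sub_nonneg.2 (Nat.cast_le.2 hk)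
  have : (n : ℝ) * f k ≤ 0 := by
    nlinarith [mul_nonpos_of_nonneg_of_nonpos hnk h0, mul_nonpos_of_nonneg_of_nonpos k.cast_nonneg hn]
  exact nonpos_of_mul_nonpos_right this (by exact_mod_cast hnpos)

lemma abs_linearInterp_sub_le {g : ℕ → ℝ} {n : ℕ} {M : ℝ}
    (hg : ∀ k, k + 2 ≤ n → |secondDiff g k| ≤ M) {k : ℕ} (hk : k ≤ n) :
    |g 0 + (k / n) * (g n - g 0) - g k| ≤ M / 2 * k * (n - k) := by
  have hend : g 0 + ((n : ℝ) / n) * (g n - g 0) - g n = 0 := by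
    rcases Nat.eq_zero_or_pos n with rfl | hn
    · simp
    · rw [div_self (by positivity)]; ring
  -- for `|c| = 1`, `c * error - M s (n - s) / 2` is discretely convex and vanishes at both ends
  have hside : ∀ c : ℝ, |c| = 1 → c * (g 0 + (k / n) * (g n - g 0) - g k) ≤ M / 2 * k * (n - k) := by
    intro c hc
    have := nonpos_of_secondDiff_nonneg
      (f := fun s => c * (g 0 + (s / n) * (g n - g 0) - g s) - M / 2 * s * (n - s)) (n := n)
      (fun s hs => by
        have hcs : c * secondDiff g s ≤ M :=
          (le_abs_self _).trans (by rw [abs_mul, hc, one_mul]; exact hg s hs)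
        simp only [secondDiff] at hcs ⊢
        push_cast
        linear_combination hcs)
      (by simp) (by simp [hend]) hk
    simpa using this
  exact abs_le'.2 ⟨by simpa using hside 1 (by simp), by simpa using hside (-1) (by simp)⟩

lemma abs_linearInterp_sub_le_sq {g : ℕ → ℝ} {n : ℕ} {M : ℝ} (hM : 0 ≤ M)
    (hg : ∀ k, k + 2 ≤ n → |secondDiff g k| ≤ M) {k : ℕ} (hk : k ≤ n) :
    |g 0 + (k / n) * (g n - g 0) - g k| ≤ M * n ^ 2 / 8 := by
  refine (abs_linearInterp_sub_le hg hk).trans ?_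
  nlinarith [mul_nonneg hM (sq_nonneg ((n : ℝ) - 2 * k))]

lemma abs_div_sub_one_le_div {a b E r : ℝ} (hr : 0 < r) (hrb : r ≤ b) (h : |a - b| ≤ E) :
    |a / b - 1| ≤ E / r := by
  have hb : 0 < b := hr.trans_le hrb
  rw [div_sub_one hb.ne', abs_div, abs_of_pos hb]
  exact div_le_div₀ ((abs_nonneg _).trans h) h hr hrb

lemma abs_div_sub_one_le {x y δ : ℝ} (hx : |x - 1| ≤ δ) (hy : |y - 1| ≤ δ) (hδ : δ < 1) :
    |x / y - 1| ≤ 2 * δ / (1 - δ) := by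
  have hy' : 1 - δ ≤ y := by linarith [(abs_le.1 hy).1]
  have hy0 : 0 < y := (sub_pos.2 hδ).trans_le hy'
  have hxy : |x - y| ≤ 2 * δ := by
    calc |x - y| = |(x - 1) - (y - 1)| := by ring_nf
      _ ≤ |x - 1| + |y - 1| := abs_sub _ _
      _ ≤ 2 * δ := by linarith
  rw [div_sub_one hy0.ne', abs_div, abs_of_pos hy0]
  exact div_le_div₀ ((abs_nonneg _).trans hxy) hxy (sub_pos.2 hδ) hy'

lemma div_mul_eq_div_mul_mul_of_div_mul_eq {K : Type*} [Field K] {a b a' b' x y P Q : K}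
    (ha : a ≠ 0) (hb' : b' ≠ 0) (h : a / x * P = b / y * Q) :
    a' / x * P = b' / y * Q * ((a' / a) / (b' / b)) := by
  calc a' / x * P = a' / a * (a / x * P) := by field_simp
    _ = b' / y * Q * ((a' / a) / (b' / b)) := by rw [h]; field_simp

theorem interpolated_flow_consistency_general
    (lam t : ℕ) (M Rmin : ℝ) (hM : 0 ≤ M) (hRmin : 0 < Rmin)
    (hδ : M * (lam : ℝ) ^ 2 / (8 * Rmin) < 1)
    (R q : ℕ → ℝ)
    (hR : ∀ s : ℕ, s ≤ t + lam → Rmin ≤ R s)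
    (hsec : ∀ s : ℕ, t + 1 ≤ s → s ≤ t + lam - 1 →
      |R (s + 1) - 2 * R s + R (s - 1)| ≤ M)
    (Rt : ℕ → ℝ)
    (hRt : ∀ i : ℕ, i ≤ lam →
      Rt (t + i) = R t + ((i : ℝ) / (lam : ℝ)) * (R (t + lam) - R t))
    (i j : ℕ) (hti : t ≤ i) (hij : i < j) (hj : j ≤ t + lam)
    (P Q : ℝ)
    (hflow : (R i / q i) * P = (R j / q j) * Q) :
    ∃ θ : ℝ,
      (Rt i / q i) * P = (Rt j / q j) * Q * θ ∧
      |θ - 1| ≤ 2 * (M * (lam : ℝ) ^ 2 / (8 * Rmin)) /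
        (1 - M * (lam : ℝ) ^ 2 / (8 * Rmin)) := by
  set δ := M * (lam : ℝ) ^ 2 / (8 * Rmin)
  have hsecond : ∀ k, k + 2 ≤ lam → |secondDiff (fun m => R (t + m)) k| ≤ M := fun k hk => by
    have := hsec (t + k + 1) (by omega) (by omega)
    simpa [secondDiff, add_assoc] using this
  have hrel : ∀ s, t ≤ s → s ≤ t + lam → |Rt s / R s - 1| ≤ δ := by
    intro s hts hs
    obtain ⟨k, rfl⟩ := Nat.exists_eq_add_of_le hts
    have herr := abs_linearInterp_sub_le_sq hM hsecond (k := k) (by omega)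
    rw [add_zero, ← hRt k (by omega)] at herr
    rw [show δ = M * lam ^ 2 / 8 / Rmin by ring]
    exact abs_div_sub_one_le_div hRmin (hR _ hs) herr
  have hRtj : Rt j ≠ 0 := fun h0 => by
    have := hrel j (by omega) hj
    rw [h0, zero_div, zero_sub, abs_neg, abs_one] at this
    exact absurd hδ this.not_gt
  exact ⟨_, div_mul_eq_div_mul_mul_of_div_mul_eq (hRmin.trans_le (hR i (by omega))).ne' hRtj hflow,
    abs_div_sub_one_le (hrel i hti (by omega)) (hrel j (by omega) hj) hδ⟩

/-- Proposition 1(b): interpolated rewards preserve flow consistency up to a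
multiplicative factor `θ` with `|θ - 1| ≤ 2δ/(1 - δ)`, where `δ = M λ² / (8 R_min)`. -/
theorem interpolated_flow_consistency
    (lam t : ℕ) (hlam : 0 < lam) (M Rmin : ℝ) (hM : 0 ≤ M) (hRmin : 0 < Rmin)
    (hδ : M * (lam : ℝ) ^ 2 / (8 * Rmin) < 1)
    (R q : ℕ → ℝ)
    (hR : ∀ s : ℕ, s ≤ t + lam → Rmin ≤ R s)
    (hsec : ∀ s : ℕ, t + 1 ≤ s → s ≤ t + lam - 1 →
      |R (s + 1) - 2 * R s + R (s - 1)| ≤ M)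
    (hq : ∀ s : ℕ, 0 < q s)
    (Rt : ℕ → ℝ)
    (hRt : ∀ i : ℕ, i ≤ lam →
      Rt (t + i) = R t + ((i : ℝ) / (lam : ℝ)) * (R (t + lam) - R t))
    (i j : ℕ) (hti : t ≤ i) (hij : i < j) (hj : j ≤ t + lam)
    (P Q : ℝ) (hP : 0 < P) (hQ : 0 < Q)
    (hflow : (R i / q i) * P = (R j / q j) * Q) :
    ∃ θ : ℝ,
      (Rt i / q i) * P = (Rt j / q j) * Q * θ ∧
      |θ - 1| ≤ 2 * (M * (lam : ℝ) ^ 2 / (8 * Rmin)) /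
        (1 - M * (lam : ℝ) ^ 2 / (8 * Rmin)) :=
  interpolated_flow_consistency_general lam t M Rmin hM hRmin hδ R q hR hsec Rt hRt i j hti hij hj P
    Q hflow
end
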